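/- arXiv:2208.00762 — 2 statements merged into one kernel-verified Lean document; each statement's English description precedes it below -/
import Mathlib

section
/- Let S ⊆ F(X) and T ⊆ F(Y) be Riesz spaces. Then the smallest Lebesgue lattice containing S ⊗ T equals the smallest Lebesgue lattice containing L(S) ⊗ L(T): L(S ⊗ T) = L(L(S) ⊗ L(T)). -/
open Filter Topology

/-- `Pdom M`: dominated pointwise limits of sequences in `M`
(sequence `f₀, f₁, …` with `|fₙ| ≤ f₀` for `n ≥ 1`, converging pointwise). -/
def Pdom {Z : Type*} (M : Set (Z → ℝ)) : Set (Z → ℝ) :=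
  { f | ∃ F : ℕ → Z → ℝ, (∀ n, F n ∈ M) ∧ (∀ n, |F (n + 1)| ≤ F 0) ∧
      ∀ z, Tendsto (fun n => F n z) atTop (𝓝 (f z)) }

/-- `U` is a vector subspace of the functions `Z → ℝ`. -/
def IsSubspace {Z : Type*} (U : Set (Z → ℝ)) : Prop :=
  (0 : Z → ℝ) ∈ U ∧ (∀ f g, f ∈ U → g ∈ U → f + g ∈ U) ∧
    ∀ (c : ℝ) (f), f ∈ U → c • f ∈ U

/-- A Riesz space of functions: a subspace closed under pointwise absolute value. -/
def IsRiesz {Z : Type*} (R : Set (Z → ℝ)) : Prop :=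
  IsSubspace R ∧ ∀ f, f ∈ R → |f| ∈ R

/-- A Lebesgue lattice: a Riesz space closed under dominated pointwise limits. -/
def IsLebesgue {Z : Type*} (L : Set (Z → ℝ)) : Prop :=
  IsRiesz L ∧ Pdom L ⊆ L

/-- smallest Riesz space containing `M`. -/
def RGen {Z : Type*} (M : Set (Z → ℝ)) : Set (Z → ℝ) :=
  ⋂₀ { R | IsRiesz R ∧ M ⊆ R }

/-- smallest Lebesgue lattice containing `M`. -/
def LGen {Z : Type*} (M : Set (Z → ℝ)) : Set (Z → ℝ) :=
  ⋂₀ { L | IsLebesgue L ∧ M ⊆ L }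

/-- Daniell integral on `R`: additive, homogeneous, monotone, continuous under
decreasing convergence to `0`. -/
def IsDaniell {Z : Type*} (R : Set (Z → ℝ)) (I : (Z → ℝ) → ℝ) : Prop :=
  IsRiesz R ∧
  (∀ f g, f ∈ R → g ∈ R → I (f + g) = I f + I g) ∧
  (∀ (c : ℝ) (f), f ∈ R → I (c • f) = c * I f) ∧
  (∀ f, f ∈ R → I f ≤ I |f|) ∧
  ∀ F : ℕ → Z → ℝ, (∀ n, F n ∈ R) → (∀ n, 0 ≤ F (n + 1)) →
    (∀ n, F (n + 1) ≤ F n) →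
    (∀ z, Tendsto (fun n => F n z) atTop (𝓝 0)) →
    Tendsto (fun n => I (F n)) atTop (𝓝 0)

/-- elementary tensor `(g ⊗ h)(x, y) = g x * h y`. -/
def tensor {X Y : Type*} (g : X → ℝ) (h : Y → ℝ) : X × Y → ℝ :=
  fun p => g p.1 * h p.2

/-- tensor product `V ⊗ W`: finite sums of elementary tensors. -/
def TensorSet {X Y : Type*} (V : Set (X → ℝ)) (W : Set (Y → ℝ)) :
    Set (X × Y → ℝ) :=
  { f | ∃ (k : ℕ) (g : Fin k → X → ℝ) (h : Fin k → Y → ℝ),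
      (∀ i, g i ∈ V) ∧ (∀ i, h i ∈ W) ∧ f = ∑ i, tensor (g i) (h i) }

/-- `iterP U m`: `U₁ = U`, `U_{m+1} = P(U_m)` (0-indexed). -/
def iterP {Z : Type*} (U : Set (Z → ℝ)) : ℕ → Set (Z → ℝ)
  | 0 => U
  | n + 1 => Pdom (iterP U n)

/-!
Fix `h ≥ 0`. Since `g ↦ g ⊗ h` is linear, commutes with `|·|` and preserves dominated
pointwise limits, the set `{g | g ⊗ h ∈ L(S ⊗ T)}` is a Lebesgue lattice containing `S`,
hence containing `L(S)`. Splitting `h ∈ T` as `|h| - (|h| - h)` removes the sign condition, so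
`L(S) ⊗ T ⊆ L(S ⊗ T)`. Repeating the argument in the second factor, with the Riesz space
`L(S)` in place of `T`, gives `L(S) ⊗ L(T) ⊆ L(S ⊗ T)`; the reverse inclusion is monotonicity.
-/

section Generation

variable {Z : Type*}

lemma IsSubspace.sub_mem {U : Set (Z → ℝ)} (hU : IsSubspace U) {f g : Z → ℝ}
    (hf : f ∈ U) (hg : g ∈ U) : f - g ∈ U := by
  have h : f - g = f + (-1 : ℝ) • g := by
    rw [neg_one_smul, sub_eq_add_neg]
  exact h ▸ hU.2.1 _ _ hf (hU.2.2 _ _ hg)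

lemma IsSubspace.sum_mem {U : Set (Z → ℝ)} (hU : IsSubspace U) {k : ℕ} (f : Fin k → Z → ℝ)
    (hf : ∀ i, f i ∈ U) : ∑ i, f i ∈ U :=
  Finset.sum_induction f (· ∈ U) hU.2.1 hU.1 fun i _ => hf i

lemma IsRiesz.exists_nonneg_sub_eq {R : Set (Z → ℝ)} (hR : IsRiesz R) {f : Z → ℝ}
    (hf : f ∈ R) : ∃ p ∈ R, ∃ q ∈ R, 0 ≤ p ∧ 0 ≤ q ∧ f = p - q :=
  ⟨|f|, hR.2 f hf, |f| - f, hR.1.sub_mem (hR.2 f hf) hf, abs_nonneg f,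
    sub_nonneg.2 (le_abs_self f), (sub_sub_cancel _ _).symm⟩

lemma isLebesgue_sInter {𝓛 : Set (Set (Z → ℝ))} (h𝓛 : ∀ L ∈ 𝓛, IsLebesgue L) :
    IsLebesgue (⋂₀ 𝓛) := by
  refine ⟨⟨⟨fun L hL => (h𝓛 L hL).1.1.1, ?_, ?_⟩, ?_⟩, ?_⟩
  · exact fun f g hf hg L hL => (h𝓛 L hL).1.1.2.1 f g (hf L hL) (hg L hL)
  · exact fun c f hf L hL => (h𝓛 L hL).1.1.2.2 c f (hf L hL)
  · exact fun f hf L hL => (h𝓛 L hL).1.2 f (hf L hL)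
  · rintro f ⟨F, hF, hdom, hlim⟩ L hL
    exact (h𝓛 L hL).2 ⟨F, fun n => hF n L hL, hdom, hlim⟩

lemma isLebesgue_LGen (M : Set (Z → ℝ)) : IsLebesgue (LGen M) :=
  isLebesgue_sInter fun _ hL => hL.1

lemma subset_LGen (M : Set (Z → ℝ)) : M ⊆ LGen M :=
  Set.subset_sInter fun _ hL => hL.2

lemma LGen_subset {M L : Set (Z → ℝ)} (hL : IsLebesgue L) (hM : M ⊆ L) : LGen M ⊆ L :=
  Set.sInter_subset_of_mem ⟨hL, hM⟩

lemma LGen_mono {M N : Set (Z → ℝ)} (hMN : M ⊆ N) : LGen M ⊆ LGen N :=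
  LGen_subset (isLebesgue_LGen N) (hMN.trans (subset_LGen N))

end Generation

section Products

variable {W Z Z' : Type*}

lemma IsLebesgue.setOf_comp_mul_mem {L : Set (W → ℝ)} (hL : IsLebesgue L) (π : W → Z)
    {w : W → ℝ} (hw : 0 ≤ w) : IsLebesgue {f : Z → ℝ | (f ∘ π) * w ∈ L} := by
  have habs : ∀ f : Z → ℝ, (|f| ∘ π) * w = |(f ∘ π) * w| := fun f => by
    ext z; simp [abs_mul, abs_of_nonneg (hw z)]
  refine ⟨⟨⟨?_, fun f g hf hg => ?_, fun c f hf => ?_⟩, fun f hf => ?_⟩, ?_⟩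
  · simpa [Set.mem_ofPred_eq, Pi.zero_comp, zero_mul] using hL.1.1.1
  · simpa only [Set.mem_ofPred_eq, Pi.add_comp, add_mul] using hL.1.1.2.1 _ _ hf hg
  · simpa only [Set.mem_ofPred_eq, Pi.smul_comp, smul_mul_assoc] using hL.1.1.2.2 c _ hf
  · simpa only [Set.mem_ofPred_eq, habs] using hL.1.2 _ hf
  · rintro f ⟨F, hF, hdom, hlim⟩
    refine hL.2 ⟨fun n => (F n ∘ π) * w, hF, fun n z => ?_, fun z => ?_⟩
    · rw [← habs]
      exact mul_le_mul_of_nonneg_right (hdom n (π z)) (hw z)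
    · exact (hlim (π z)).mul_const (w z)

lemma IsLebesgue.comp_mul_comp_mem_of_mem_LGen {L : Set (W → ℝ)} (hL : IsLebesgue L)
    {M : Set (Z → ℝ)} {R : Set (Z' → ℝ)} (hR : IsRiesz R) (π₁ : W → Z) (π₂ : W → Z')
    (hMR : ∀ f ∈ M, ∀ g ∈ R, (f ∘ π₁) * (g ∘ π₂) ∈ L) :
    ∀ f ∈ LGen M, ∀ g ∈ R, (f ∘ π₁) * (g ∘ π₂) ∈ L := by
  have hnonneg : ∀ p ∈ R, 0 ≤ p → ∀ f ∈ LGen M, (f ∘ π₁) * (p ∘ π₂) ∈ L :=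
    fun p hp hp0 f hf => LGen_subset (hL.setOf_comp_mul_mem π₁ fun w => hp0 (π₂ w))
      (fun f' hf' => hMR f' hf' p hp) hf
  intro f hf g hg
  obtain ⟨p, hp, q, hq, hp0, hq0, rfl⟩ := hR.exists_nonneg_sub_eq hg
  rw [Pi.sub_comp, mul_sub]
  exact hL.1.1.sub_mem (hnonneg p hp hp0 f hf) (hnonneg q hq hq0 f hf)

end Products

section Tensor

variable {X Y : Type*}

lemma tensor_eq_comp_mul_comp (g : X → ℝ) (h : Y → ℝ) :
    tensor g h = (g ∘ Prod.fst) * (h ∘ Prod.snd) :=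
  rfl

lemma TensorSet_mono {V V' : Set (X → ℝ)} {W W' : Set (Y → ℝ)} (hV : V ⊆ V') (hW : W ⊆ W') :
    TensorSet V W ⊆ TensorSet V' W' := by
  rintro f ⟨k, g, h, hg, hh, rfl⟩
  exact ⟨k, g, h, fun i => hV (hg i), fun i => hW (hh i), rfl⟩

lemma TensorSet_subset {V : Set (X → ℝ)} {W : Set (Y → ℝ)} {U : Set (X × Y → ℝ)}
    (hU : IsSubspace U) (hVW : ∀ g ∈ V, ∀ h ∈ W, tensor g h ∈ U) : TensorSet V W ⊆ U := by
  rintro f ⟨k, g, h, hg, hh, rfl⟩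
  exact hU.sum_mem _ fun i => hVW (g i) (hg i) (h i) (hh i)

end Tensor

theorem stmt18_general {X Y : Type*} (S : Set (X → ℝ)) (T : Set (Y → ℝ))
    (hT : IsRiesz T) :
    LGen (TensorSet S T) = LGen (TensorSet (LGen S) (LGen T)) := by
  have hL := isLebesgue_LGen (TensorSet S T)
  have hST : ∀ g ∈ S, ∀ h ∈ T, tensor g h ∈ LGen (TensorSet S T) := fun g hg h hh =>
    subset_LGen _ ⟨1, fun _ => g, fun _ => h, fun _ => hg, fun _ => hh, by simp⟩
  have hLST : ∀ g ∈ LGen S, ∀ h ∈ T, tensor g h ∈ LGen (TensorSet S T) :=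
    hL.comp_mul_comp_mem_of_mem_LGen hT Prod.fst Prod.snd hST
  have hLSLT : ∀ h ∈ LGen T, ∀ g ∈ LGen S,
      (h ∘ Prod.snd) * (g ∘ Prod.fst) ∈ LGen (TensorSet S T) :=
    hL.comp_mul_comp_mem_of_mem_LGen (isLebesgue_LGen S).1 Prod.snd Prod.fst
      fun h hh g hg => mul_comm (g ∘ Prod.fst) _ ▸ hLST g hg h hh
  refine (LGen_mono (TensorSet_mono (subset_LGen S) (subset_LGen T))).antisymm ?_
  refine LGen_subset hL (TensorSet_subset hL.1.1 fun g hg h hh => ?_)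
  rw [tensor_eq_comp_mul_comp, mul_comm]
  exact hLSLT h hh g hg

theorem stmt18 {X Y : Type*} (S : Set (X → ℝ)) (T : Set (Y → ℝ))
    (hS : IsRiesz S) (hT : IsRiesz T) :
    LGen (TensorSet S T) = LGen (TensorSet (LGen S) (LGen T)) :=
  stmt18_general S T hT
end

section
/- Let U ⊆ F(Z) be a vector space with |U| ⊆ P(U), and R = ⋃_{m≥1} U_m with U₁ = U, U_{m+1} = P(U_m). If I and I' are two Daniell integrals on R that coincide on U, then I = I'. -/
open Filter Topology

namespace Stmt19Aux

variable {Z : Type*}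

noncomputable def fmax (a b : Z → ℝ) : Z → ℝ := (2⁻¹ : ℝ) • (a + b + |a - b|)
noncomputable def fmin (a b : Z → ℝ) : Z → ℝ := (2⁻¹ : ℝ) • (a + b - |a - b|)

lemma fmax_apply (a b : Z → ℝ) (z : Z) : fmax a b z = max (a z) (b z) := by
  simp only [fmax, Pi.smul_apply, Pi.add_apply, Pi.abs_apply, Pi.sub_apply, smul_eq_mul]
  rcases le_total (a z) (b z) with h | h
  · rw [abs_of_nonpos (by linarith), max_eq_right h]; ring
  · rw [abs_of_nonneg (by linarith), max_eq_left h]; ring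

lemma fmin_apply (a b : Z → ℝ) (z : Z) : fmin a b z = min (a z) (b z) := by
  simp only [fmin, Pi.smul_apply, Pi.add_apply, Pi.abs_apply, Pi.sub_apply, smul_eq_mul]
  rcases le_total (a z) (b z) with h | h
  · rw [abs_of_nonpos (by linarith), min_eq_left h]; ring
  · rw [abs_of_nonneg (by linarith), min_eq_right h]; ring

lemma fmin_add_fmax (a b : Z → ℝ) : fmin a b + fmax a b = a + b := by
  funext z
  simp only [Pi.add_apply, fmin_apply, fmax_apply]
  exact min_add_max (a z) (b z)

section Mem

variable {R : Set (Z → ℝ)}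

lemma mem_add (hR : IsRiesz R) {a b : Z → ℝ} (ha : a ∈ R) (hb : b ∈ R) : a + b ∈ R := hR.1.2.1 a b ha hb

lemma mem_smul (hR : IsRiesz R) (c : ℝ) {a : Z → ℝ} (ha : a ∈ R) : c • a ∈ R := hR.1.2.2 c a ha

lemma mem_neg (hR : IsRiesz R) {a : Z → ℝ} (ha : a ∈ R) : -a ∈ R := by
  have := mem_smul hR (-1) ha; rwa [neg_one_smul] at this

lemma mem_sub (hR : IsRiesz R) {a b : Z → ℝ} (ha : a ∈ R) (hb : b ∈ R) : a - b ∈ R := by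
  rw [sub_eq_add_neg]; exact mem_add hR ha (mem_neg hR hb)

lemma mem_abs (hR : IsRiesz R) {a : Z → ℝ} (ha : a ∈ R) : |a| ∈ R := hR.2 a ha

lemma mem_fmax (hR : IsRiesz R) {a b : Z → ℝ} (ha : a ∈ R) (hb : b ∈ R) : fmax a b ∈ R :=
  mem_smul hR _ (mem_add hR (mem_add hR ha hb) (mem_abs hR (mem_sub hR ha hb)))

lemma mem_fmin (hR : IsRiesz R) {a b : Z → ℝ} (ha : a ∈ R) (hb : b ∈ R) : fmin a b ∈ R :=
  mem_smul hR _ (mem_sub hR (mem_add hR ha hb) (mem_abs hR (mem_sub hR ha hb)))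

end Mem

section Daniell

variable {R : Set (Z → ℝ)} {I : (Z → ℝ) → ℝ}

lemma I_neg (hD : IsDaniell R I) {f : Z → ℝ} (hf : f ∈ R) : I (-f) = -I f := by
  have := hD.2.2.1 (-1) f hf
  rwa [neg_one_smul, neg_one_mul] at this

lemma abs_of_nonneg_fun {f : Z → ℝ} (h : ∀ z, 0 ≤ f z) : |f| = f := by
  funext z; exact abs_of_nonneg (h z)

lemma I_nonneg (hD : IsDaniell R I) {f : Z → ℝ} (hf : f ∈ R) (h0 : ∀ z, 0 ≤ f z) : 0 ≤ I f := by
  have h1 : I (-f) ≤ I |(-f)| := hD.2.2.2.1 (-f) (mem_neg hD.1 hf)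
  rw [abs_neg, abs_of_nonneg_fun h0, I_neg hD hf] at h1
  linarith

lemma I_mono (hD : IsDaniell R I) {f g : Z → ℝ} (hf : f ∈ R) (hg : g ∈ R) (h : ∀ z, f z ≤ g z) :
    I f ≤ I g := by
  have hsub : g - f ∈ R := mem_sub hD.1 hg hf
  have h1 : I (g - f + f) = I (g - f) + I f := hD.2.1 _ _ hsub hf
  rw [sub_add_cancel] at h1
  have h2 : 0 ≤ I (g - f) := I_nonneg hD hsub fun z => by
    simp only [Pi.sub_apply, sub_nonneg]; exact h z
  linarith

lemma abs_I_le (hD : IsDaniell R I) {f : Z → ℝ} (hf : f ∈ R) : |I f| ≤ I |f| := by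
  rw [abs_le]
  constructor
  · have h1 : I (-f) ≤ I |(-f)| := hD.2.2.2.1 (-f) (mem_neg hD.1 hf)
    rw [abs_neg, I_neg hD hf] at h1
    linarith
  · exact hD.2.2.2.1 f hf

end Daniell

noncomputable def phiSeq (g : ℕ → Z → ℝ) (n : ℕ) : ℕ → Z → ℝ
  | 0 => g n
  | p + 1 => fmax (phiSeq g n p) (g (n + p + 1))

lemma le_phiSeq (g : ℕ → Z → ℝ) (n : ℕ) {p k : ℕ} (hk : k ≤ p) (z : Z) :
    g (n + k) z ≤ phiSeq g n p z := by
  induction p with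
  | zero =>
    have : k = 0 := Nat.le_zero.mp hk
    subst this; simp [phiSeq]
  | succ p ih =>
    rw [phiSeq, fmax_apply]
    by_cases hk' : k ≤ p
    · exact le_max_of_le_left (ih hk')
    · have : k = p + 1 := by omega
      subst this
      rw [← add_assoc]
      exact le_max_right _ _

lemma phiSeq_le (g : ℕ → Z → ℝ) (n : ℕ) {p : ℕ} {z : Z} {c : ℝ}
    (H : ∀ k, k ≤ p → g (n + k) z ≤ c) : phiSeq g n p z ≤ c := by
  induction p with
  | zero => simpa [phiSeq] using H 0 le_rfl
  | succ p ih =>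
    rw [phiSeq, fmax_apply]
    refine max_le (ih fun k hk => H k (hk.trans (Nat.le_succ p))) ?_
    have := H (p + 1) le_rfl
    rwa [← add_assoc] at this

lemma phiSeq_mono (g : ℕ → Z → ℝ) (n : ℕ) {p q : ℕ} (hpq : p ≤ q) (z : Z) :
    phiSeq g n p z ≤ phiSeq g n q z :=
  phiSeq_le g n fun k hk => le_phiSeq g n (hk.trans hpq) z

lemma phiSeq_mem {R : Set (Z → ℝ)} (hR : IsRiesz R) {g : ℕ → Z → ℝ}
    (hg : ∀ n, g n ∈ R) (n p : ℕ) : phiSeq g n p ∈ R := by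
  induction p with
  | zero => exact hg n
  | succ p ih => exact mem_fmax hR ih (hg _)

lemma phiSeq_nonneg {g : ℕ → Z → ℝ} (hg0 : ∀ n z, 0 ≤ g n z) (n p : ℕ) (z : Z) :
    0 ≤ phiSeq g n p z :=
  le_trans (by simpa using hg0 n z) (le_phiSeq g n (Nat.zero_le p) z)

noncomputable def psiSeq (g : ℕ → Z → ℝ) (p : ℕ → ℕ) : ℕ → Z → ℝ
  | 0 => phiSeq g 0 (p 0)
  | n + 1 => fmin (psiSeq g p n) (phiSeq g (n + 1) (p (n + 1)))

lemma psiSeq_mem {R : Set (Z → ℝ)} (hR : IsRiesz R) {g : ℕ → Z → ℝ}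
    (hg : ∀ n, g n ∈ R) (p : ℕ → ℕ) (n : ℕ) : psiSeq g p n ∈ R := by
  induction n with
  | zero => exact phiSeq_mem hR hg _ _
  | succ n ih => exact mem_fmin hR ih (phiSeq_mem hR hg _ _)

lemma psiSeq_le_phiSeq (g : ℕ → Z → ℝ) (p : ℕ → ℕ) (n : ℕ) (z : Z) :
    psiSeq g p n z ≤ phiSeq g n (p n) z := by
  cases n with
  | zero => exact le_rfl
  | succ n => rw [psiSeq, fmin_apply]; exact min_le_right _ _

lemma psiSeq_antitone (g : ℕ → Z → ℝ) (p : ℕ → ℕ) (n : ℕ) (z : Z) :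
    psiSeq g p (n + 1) z ≤ psiSeq g p n z := by
  rw [psiSeq, fmin_apply]; exact min_le_left _ _

lemma psiSeq_nonneg {g : ℕ → Z → ℝ} (hg0 : ∀ n z, 0 ≤ g n z) (p : ℕ → ℕ)
    (n : ℕ) (z : Z) : 0 ≤ psiSeq g p n z := by
  induction n with
  | zero => exact phiSeq_nonneg hg0 _ _ z
  | succ n ih =>
    rw [psiSeq, fmin_apply]
    exact le_min ih (phiSeq_nonneg hg0 _ _ z)

/-- Dominated convergence to zero for a Daniell integral, using only finite
lattice operations. -/
lemma dct {R : Set (Z → ℝ)} {I : (Z → ℝ) → ℝ} (hD : IsDaniell R I)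
    (g : ℕ → Z → ℝ) (h : Z → ℝ) (hg : ∀ n, g n ∈ R) (hh : h ∈ R)
    (hg0 : ∀ n z, 0 ≤ g n z) (hgh : ∀ n z, g n z ≤ h z)
    (hlim : ∀ z, Tendsto (fun n => g n z) atTop (𝓝 0)) :
    Tendsto (fun n => I (g n)) atTop (𝓝 0) := by
  have hR : IsRiesz R := hD.1
  have hphim : ∀ n p, phiSeq g n p ∈ R := phiSeq_mem hR hg
  have hphi_le_h : ∀ n p, I (phiSeq g n p) ≤ I h := fun n p =>
    I_mono hD (hphim n p) hh fun z => phiSeq_le g n fun k _ => hgh _ z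
  have bdd : ∀ n, BddAbove (Set.range fun p => I (phiSeq g n p)) := fun n =>
    ⟨I h, by rintro x ⟨p, rfl⟩; exact hphi_le_h n p⟩
  set c : ℕ → ℝ := fun n => ⨆ p, I (phiSeq g n p) with hc
  have hcle : ∀ n p, I (phiSeq g n p) ≤ c n := fun n p => le_ciSup (bdd n) p
  -- auxiliary claim
  have aux : ∀ ε : ℝ, 0 < ε → ∃ N, ∀ n ≥ N, I (g n) < ε := by
    intro ε hε
    have hδ : (0:ℝ) < ε / 4 := by linarith
    have hex : ∀ n, ∃ q, c n - ε / 4 * (2⁻¹ : ℝ) ^ n < I (phiSeq g n q) := by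
      intro n
      apply exists_lt_of_lt_ciSup
      have : 0 < ε / 4 * (2⁻¹ : ℝ) ^ n := by positivity
      have := sub_lt_self (c n) this
      exact this
    choose p hp using hex
    set ψ : ℕ → Z → ℝ := psiSeq g p with hψ
    have hψm : ∀ n, ψ n ∈ R := psiSeq_mem hR hg p
    have hψ0 : ∀ n z, 0 ≤ ψ n z := psiSeq_nonneg hg0 p
    -- ψ converges to 0 pointwise
    have hψlim : ∀ z, Tendsto (fun n => ψ n z) atTop (𝓝 0) := by
      intro z
      have hup : Tendsto (fun n => phiSeq g n (p n) z) atTop (𝓝 0) := by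
        rw [Metric.tendsto_atTop]
        intro δ hδ'
        obtain ⟨N, hN⟩ := (Metric.tendsto_atTop.mp (hlim z)) (δ / 2) (by linarith)
        refine ⟨N, fun n hn => ?_⟩
        have h1 : phiSeq g n (p n) z ≤ δ / 2 := by
          apply phiSeq_le
          intro k _
          have := hN (n + k) (le_trans hn (Nat.le_add_right n k))
          rw [Real.dist_eq, sub_zero] at this
          exact le_of_lt (lt_of_abs_lt this)
        rw [Real.dist_eq, sub_zero, abs_of_nonneg (phiSeq_nonneg hg0 n (p n) z)]
        linarith
      exact squeeze_zero (fun n => hψ0 n z) (fun n => psiSeq_le_phiSeq g p n z) hup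
    have hIψ : Tendsto (fun n => I (ψ n)) atTop (𝓝 0) := by
      apply hD.2.2.2.2 ψ hψm
      · intro n z
        simpa using hψ0 (n + 1) z
      · intro n z
        exact psiSeq_antitone g p n z
      · exact hψlim
    -- key telescoping estimate
    have key : ∀ n, c n ≤ I (ψ n) + ε / 4 * ∑ k ∈ Finset.range (n + 1), (2⁻¹ : ℝ) ^ k := by
      intro n
      induction n with
      | zero =>
        have := hp 0
        simp only [pow_zero, mul_one, Finset.sum_range_one] at *
        have hψ0eq : ψ 0 = phiSeq g 0 (p 0) := rfl
        rw [hψ0eq]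
        linarith
      | succ n ih =>
        set a := ψ n
        set b := phiSeq g (n + 1) (p (n + 1))
        have hma : a ∈ R := hψm n
        have hmb : b ∈ R := hphim _ _
        have hrec : I (ψ (n + 1)) = I a + I b - I (fmax a b) := by
          have h1 := hD.2.1 (fmin a b) (fmax a b) (mem_fmin hR hma hmb) (mem_fmax hR hma hmb)
          rw [fmin_add_fmax] at h1
          have h2 := hD.2.1 a b hma hmb
          have hψeq : ψ (n + 1) = fmin a b := rfl
          rw [hψeq]
          linarith
        have hmaxle : I (fmax a b) ≤ c n := by
          refine le_trans (I_mono hD (mem_fmax hR hma hmb)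
            (hphim n (p n + p (n + 1) + 1)) fun z => ?_) (hcle n _)
          rw [fmax_apply]
          refine max_le ?_ ?_
          · exact le_trans (psiSeq_le_phiSeq g p n z)
              (phiSeq_mono g n (by omega) z)
          · apply phiSeq_le
            intro k hk
            have heq : n + 1 + k = n + (k + 1) := by omega
            rw [heq]
            exact le_phiSeq g n (by omega) z
        have hsum : ∑ k ∈ Finset.range (n + 1 + 1), (2⁻¹ : ℝ) ^ k
            = ∑ k ∈ Finset.range (n + 1), (2⁻¹ : ℝ) ^ k + (2⁻¹ : ℝ) ^ (n + 1) :=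
          Finset.sum_range_succ _ _
        have hpn := hp (n + 1)
        rw [hsum]
        linarith
    -- conclude
    obtain ⟨N, hN⟩ := (Metric.tendsto_atTop.mp hIψ) (ε / 4) hδ
    refine ⟨N, fun n hn => ?_⟩
    have h1 : I (g n) ≤ c n := hcle n 0
    have h2 := key n
    have h3 : ∑ k ∈ Finset.range (n + 1), (2⁻¹ : ℝ) ^ k ≤ 2 := by
      have := sum_geometric_two_le (n + 1)
      simpa [one_div] using this
    have h4 : I (ψ n) < ε / 4 := by
      have := hN n hn
      rw [Real.dist_eq, sub_zero] at this
      exact lt_of_abs_lt this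
    have h5 : ε / 4 * ∑ k ∈ Finset.range (n + 1), (2⁻¹ : ℝ) ^ k ≤ ε / 4 * 2 :=
      mul_le_mul_of_nonneg_left h3 (le_of_lt hδ)
    linarith
  rw [Metric.tendsto_atTop]
  intro ε hε
  obtain ⟨N, hN⟩ := aux ε hε
  refine ⟨N, fun n hn => ?_⟩
  rw [Real.dist_eq, sub_zero, abs_of_nonneg (I_nonneg hD (hg n) (hg0 n))]
  exact hN n hn

end Stmt19Aux

open Stmt19Aux in
theorem stmt19 {Z : Type*} (U : Set (Z → ℝ)) (hU : IsSubspace U)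
    (habs : ∀ f ∈ U, |f| ∈ Pdom U)
    (I I' : (Z → ℝ) → ℝ)
    (hI : IsDaniell (⋃ m, iterP U m) I)
    (hI' : IsDaniell (⋃ m, iterP U m) I')
    (hagree : ∀ f ∈ U, I f = I' f) :
    ∀ f ∈ ⋃ m, iterP U m, I f = I' f := by
  set R : Set (Z → ℝ) := ⋃ m, iterP U m with hRdef
  have hR : IsRiesz R := hI.1
  have hsub : ∀ m, iterP U m ⊆ R := fun m => Set.subset_iUnion (fun m => iterP U m) m
  have main : ∀ m, ∀ f ∈ iterP U m, I f = I' f := by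
    intro m
    induction m with
    | zero => exact fun f hf => hagree f hf
    | succ n ih =>
      intro f hf
      obtain ⟨F, hF, hdom, hconv⟩ := hf
      have hfR : f ∈ R := hsub (n + 1) (by exact ⟨F, hF, hdom, hconv⟩)
      have hFR : ∀ k, F k ∈ R := fun k => hsub n (hF k)
      -- the sequence gₖ = |f - F (k+1)|
      set g : ℕ → Z → ℝ := fun k => |f - F (k + 1)| with hgdef
      have hgR : ∀ k, g k ∈ R := fun k => mem_abs hR (mem_sub hR hfR (hFR (k + 1)))
      have hg0 : ∀ k z, 0 ≤ g k z := fun k z => abs_nonneg _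
      set h : Z → ℝ := |f| + F 0 with hhdef
      have hhR : h ∈ R := mem_add hR (mem_abs hR hfR) (hFR 0)
      have hgh : ∀ k z, g k z ≤ h z := by
        intro k z
        have h1 : |f z - F (k + 1) z| ≤ |f z| + |F (k + 1) z| := abs_sub _ _
        have h2 : |F (k + 1) z| ≤ F 0 z := hdom k z
        simp only [hgdef, hhdef, Pi.abs_apply, Pi.sub_apply, Pi.add_apply]
        calc |f z - F (k + 1) z| ≤ |f z| + |F (k + 1) z| := h1
          _ ≤ |f z| + F 0 z := by linarith
      have hglim : ∀ z, Tendsto (fun k => g k z) atTop (𝓝 0) := by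
        intro z
        have h1 : Tendsto (fun k => F (k + 1) z) atTop (𝓝 (f z)) :=
          (hconv z).comp (tendsto_add_atTop_nat 1)
        have h2 : Tendsto (fun k => f z - F (k + 1) z) atTop (𝓝 (f z - f z)) :=
          tendsto_const_nhds.sub h1
        rw [sub_self] at h2
        have h3 := h2.abs
        rw [abs_zero] at h3
        simpa [hgdef] using h3
      have hIg : Tendsto (fun k => I (g k)) atTop (𝓝 0) :=
        dct hI g h hgR hhR hg0 hgh hglim
      have hI'g : Tendsto (fun k => I' (g k)) atTop (𝓝 0) :=
        dct hI' g h hgR hhR hg0 hgh hglim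
      have hbound : ∀ k, |I f - I' f| ≤ I (g k) + I' (g k) := by
        intro k
        set u : Z → ℝ := f - F (k + 1) with hudef
        have huR : u ∈ R := mem_sub hR hfR (hFR (k + 1))
        have h1 : I (u + F (k + 1)) = I u + I (F (k + 1)) :=
          hI.2.1 u (F (k + 1)) huR (hFR (k + 1))
        have h1' : I' (u + F (k + 1)) = I' u + I' (F (k + 1)) :=
          hI'.2.1 u (F (k + 1)) huR (hFR (k + 1))
        have heq : u + F (k + 1) = f := by rw [hudef, sub_add_cancel]
        rw [heq] at h1 h1'
        have hFag : I (F (k + 1)) = I' (F (k + 1)) := ih _ (hF (k + 1))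
        have h2 : |I u| ≤ I |u| := abs_I_le hI huR
        have h3 : |I' u| ≤ I' |u| := abs_I_le hI' huR
        have hgu : g k = |u| := rfl
        calc |I f - I' f| = |I u - I' u| := by rw [h1, h1', hFag]; ring_nf
          _ ≤ |I u| + |I' u| := abs_sub _ _
          _ ≤ I |u| + I' |u| := by linarith
          _ = I (g k) + I' (g k) := by rw [hgu]
      have hlim0 : Tendsto (fun k => I (g k) + I' (g k)) atTop (𝓝 0) := by
        have := hIg.add hI'g
        simpa using this
      have habs0 : |I f - I' f| ≤ 0 :=
        ge_of_tendsto hlim0 (Filter.Eventually.of_forall hbound)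
      have : I f - I' f = 0 := abs_eq_zero.mp (le_antisymm habs0 (abs_nonneg _))
      linarith
  intro f hf
  obtain ⟨s, ⟨m, rfl⟩, hfs⟩ := hf
  exact main m f hfs
end
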